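/- Let H, K be real Hilbert spaces, S, S_h : H → K bounded linear operators, y_d ∈ K, α > 0. Let u* minimize Ĵ(u) = (1/2)‖S u − y_d‖² + (α/2)‖u‖² over a closed convex set U, and let u_h* minimize Ĵ_h(u) = (1/2)‖S_h u − y_d‖² + (α/2)‖u‖² over the same U. Then α ‖u* − u_h*‖ ≤ ‖S*(S u* − y_d) − S_h*(S_h u* − y_d)‖. -/
import Mathlib

open RealInnerProductSpace

lemma vi_aux {H K : Type*} [NormedAddCommGroup H] [InnerProductSpace ℝ H] [CompleteSpace H]
    [NormedAddCommGroup K] [InnerProductSpace ℝ K] [CompleteSpace K]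
    (T : H →L[ℝ] K) (y : K) (α : ℝ) (hα : 0 < α)
    (U : Set H) (hUconv : Convex ℝ U) (w : H) (hw : w ∈ U)
    (hmin : ∀ u ∈ U, (1/2) * ‖T w - y‖^2 + (α/2) * ‖w‖^2 ≤
        (1/2) * ‖T u - y‖^2 + (α/2) * ‖u‖^2) :
    ∀ u ∈ U, 0 ≤ ⟪(ContinuousLinearMap.adjoint T) (T w - y) + α • w, u - w⟫ := by
  intro u hu
  set v := u - w with hv
  set a : ℝ := ⟪T w - y, T v⟫ + α * ⟪w, v⟫ with ha
  set b : ℝ := (1/2) * ‖T v‖^2 + (α/2) * ‖v‖^2 with hb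
  have hbnn : 0 ≤ b := by positivity
  have key : ∀ t : ℝ, t ∈ Set.Ioc (0:ℝ) 1 → 0 ≤ a + t * b := by
    intro t ht
    have hmem : w + t • v ∈ U := by
      have := hUconv hw hu (by linarith [ht.1, ht.2] : (0:ℝ) ≤ 1 - t) (le_of_lt ht.1) (by ring)
      convert this using 1
      rw [hv]; module
    have h := hmin _ hmem
    have e1 : T (w + t • v) - y = (T w - y) + t • (T v) := by
      simp [map_add, map_smul]; abel
    rw [e1] at h
    have e2 : ‖(T w - y) + t • (T v)‖^2 = ‖T w - y‖^2 + 2 * (t * ⟪T w - y, T v⟫) + t^2 * ‖T v‖^2 := by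
      rw [@norm_add_sq_real, real_inner_smul_right, norm_smul, mul_pow, Real.norm_eq_abs, sq_abs]
    have e3 : ‖w + t • v‖^2 = ‖w‖^2 + 2 * (t * ⟪w, v⟫) + t^2 * ‖v‖^2 := by
      rw [@norm_add_sq_real, real_inner_smul_right, norm_smul, mul_pow, Real.norm_eq_abs, sq_abs]
    rw [e2, e3] at h
    have ht0 := ht.1
    have : 0 ≤ t * (a + t * b) := by rw [ha, hb]; nlinarith
    nlinarith
  have hle : 0 ≤ a := by
    have htend : Filter.Tendsto (fun t : ℝ => a + t * b) (nhdsWithin 0 (Set.Ioi 0)) (nhds a) := by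
      have : Filter.Tendsto (fun t : ℝ => a + t * b) (nhds 0) (nhds (a + 0 * b)) := by
        exact Filter.Tendsto.add tendsto_const_nhds ((continuous_id.mul continuous_const).tendsto 0)
      simpa using this.mono_left nhdsWithin_le_nhds
    refine ge_of_tendsto htend ?_
    filter_upwards [Ioo_mem_nhdsGT_of_mem (by norm_num : (0:ℝ) ∈ Set.Ico (0:ℝ) 1)] with t ht
    exact key t ⟨ht.1, le_of_lt ht.2⟩
  calc (0:ℝ) ≤ a := hle
    _ = ⟪(ContinuousLinearMap.adjoint T) (T w - y) + α • w, u - w⟫ := by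
        rw [ha, inner_add_left, real_inner_smul_left, ContinuousLinearMap.adjoint_inner_left]

theorem stmt13 {H K : Type*} [NormedAddCommGroup H] [InnerProductSpace ℝ H] [CompleteSpace H]
    [NormedAddCommGroup K] [InnerProductSpace ℝ K] [CompleteSpace K]
    (S S_h : H →L[ℝ] K) (y_d : K) (α : ℝ) (hα : 0 < α)
    (U : Set H) (hUne : U.Nonempty) (hUclosed : IsClosed U) (hUconv : Convex ℝ U)
    (ustar uhstar : H) (hu : ustar ∈ U) (huh : uhstar ∈ U)
    (hmin : ∀ u ∈ U, (1/2) * ‖S ustar - y_d‖^2 + (α/2) * ‖ustar‖^2 ≤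
        (1/2) * ‖S u - y_d‖^2 + (α/2) * ‖u‖^2)
    (hminh : ∀ u ∈ U, (1/2) * ‖S_h uhstar - y_d‖^2 + (α/2) * ‖uhstar‖^2 ≤
        (1/2) * ‖S_h u - y_d‖^2 + (α/2) * ‖u‖^2) :
    α * ‖ustar - uhstar‖ ≤
      ‖(ContinuousLinearMap.adjoint S) (S ustar - y_d) -
        (ContinuousLinearMap.adjoint S_h) (S_h ustar - y_d)‖ := by
  set d := ustar - uhstar with hd
  set p := (ContinuousLinearMap.adjoint S) (S ustar - y_d) with hp
  set q := (ContinuousLinearMap.adjoint S_h) (S_h ustar - y_d) with hq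
  have h1 := vi_aux S y_d α hα U hUconv ustar hu hmin uhstar huh
  have h2 := vi_aux S_h y_d α hα U hUconv uhstar huh hminh ustar hu
  -- rewrite h2's adjoint term
  have e : (ContinuousLinearMap.adjoint S_h) (S_h uhstar - y_d)
      = q - (ContinuousLinearMap.adjoint S_h) (S_h d) := by
    rw [hq, hd]
    rw [← map_sub]
    congr 1
    rw [map_sub]
    abel
  rw [e] at h2
  have h1' : ⟪p, d⟫ + α * ⟪ustar, d⟫ ≤ 0 := by
    have : uhstar - ustar = -d := by rw [hd]; abel
    rw [this, inner_neg_right, inner_add_left, real_inner_smul_left] at h1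
    linarith
  have h2' : ‖S_h d‖^2 ≤ ⟪q, d⟫ + α * ⟪uhstar, d⟫ := by
    rw [inner_add_left, inner_sub_left, real_inner_smul_left] at h2
    have eq2 : ⟪(ContinuousLinearMap.adjoint S_h) (S_h d), d⟫ = ‖S_h d‖^2 := by
      rw [ContinuousLinearMap.adjoint_inner_left, real_inner_self_eq_norm_sq]
    rw [eq2] at h2
    linarith
  have hkey : α * ‖d‖^2 ≤ ⟪q - p, d⟫ := by
    have hds : ⟪ustar, d⟫ - ⟪uhstar, d⟫ = ‖d‖^2 := by
      rw [← inner_sub_left, ← hd, real_inner_self_eq_norm_sq]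
    have hsq : (0:ℝ) ≤ ‖S_h d‖^2 := by positivity
    rw [inner_sub_left]
    nlinarith
  have hcs : ⟪q - p, d⟫ ≤ ‖q - p‖ * ‖d‖ := real_inner_le_norm _ _
  have hnorm : ‖q - p‖ = ‖p - q‖ := by rw [← neg_sub, norm_neg]
  rcases eq_or_ne (‖d‖) 0 with h0 | h0
  · rw [← hd] at *
    rw [h0, mul_zero]; positivity
  · have hdpos : 0 < ‖d‖ := lt_of_le_of_ne (norm_nonneg _) (Ne.symm h0)
    have : α * ‖d‖ * ‖d‖ ≤ ‖p - q‖ * ‖d‖ := by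
      rw [← hnorm]
      calc α * ‖d‖ * ‖d‖ = α * ‖d‖^2 := by ring
        _ ≤ ⟪q - p, d⟫ := hkey
        _ ≤ ‖q - p‖ * ‖d‖ := hcs
    have := le_of_mul_le_mul_right this hdpos
    rw [← hd] at *
    exact this
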